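/- arXiv:2403.10062 — 2 statements merged into one kernel-verified Lean document; each statement's English description precedes it below -/
import Mathlib

section
/- Let A = A(a,α) + a_0 I_{n×m} and B = A(b,β) + b_0 I_{m×l} be asymmetric Toeplitz matrices with max(n,l) ≤ m, and suppose there exists λ ∈ C, λ ≠ 0, such that α̂_{(m,n)} = λ a and β = λ̄ b̂_{(m,l)}, where α̂_{(m,n)} = (0, ᾱ_{m-1}, ..., ᾱ_{m-n+1}) and b̂_{(m,l)} = (0, b̄_{m-1}, ..., b̄_{m-l+1}). Then AB is an n×l asymmetric Toeplitz matrix. -/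
open Matrix BigOperators

/-- Lower shift matrix: 1's on the subdiagonal. -/
noncomputable def Sh (n : ℕ) : Matrix (Fin n) (Fin n) ℂ :=
  Matrix.of fun i j => if (i : ℕ) = (j : ℕ) + 1 then 1 else 0

/-- Rectangular identity matrix. -/
noncomputable def rId (n m : ℕ) : Matrix (Fin n) (Fin m) ℂ :=
  Matrix.of fun i j => if (i : ℕ) = (j : ℕ) then 1 else 0

/-- Reversal (flip) permutation matrix. -/
noncomputable def rev (n : ℕ) : Matrix (Fin n) (Fin n) ℂ :=
  Matrix.of fun i j => if (i : ℕ) + (j : ℕ) = n - 1 then 1 else 0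

/-- Rank-one tensor x ⊗ y = x ȳᵀ. -/
noncomputable def oprod {n m : ℕ} (x : Fin n → ℂ) (y : Fin m → ℂ) : Matrix (Fin n) (Fin m) ℂ :=
  Matrix.of fun i j => x i * star (y j)

/-- Displacement ΔA = A - Sₙ A Sₘ*. -/
noncomputable def dsp {n m : ℕ} (A : Matrix (Fin n) (Fin m) ℂ) : Matrix (Fin n) (Fin m) ℂ :=
  A - Sh n * A * (Sh m)ᴴ

/-- Asymmetric Toeplitz: constant along diagonals. -/
noncomputable def IsAT {n m : ℕ} (A : Matrix (Fin n) (Fin m) ℂ) : Prop :=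
  ∀ (i : Fin n) (j : Fin m) (hi : (i : ℕ) + 1 < n) (hj : (j : ℕ) + 1 < m),
    A ⟨(i : ℕ) + 1, hi⟩ ⟨(j : ℕ) + 1, hj⟩ = A i j

/-- Asymmetric Hankel: constant along antidiagonals. -/
noncomputable def IsAH {n m : ℕ} (A : Matrix (Fin n) (Fin m) ℂ) : Prop :=
  ∀ (i : Fin n) (j : Fin m) (hi : (i : ℕ) + 1 < n) (hj : (j : ℕ) + 1 < m),
    A ⟨(i : ℕ) + 1, hi⟩ j = A i ⟨(j : ℕ) + 1, hj⟩

/-- The asymmetric Toeplitz matrix A(a,α) with zero diagonal. -/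
noncomputable def aT {n m : ℕ} (a : Fin n → ℂ) (α : Fin m → ℂ) : Matrix (Fin n) (Fin m) ℂ :=
  Matrix.of fun i j =>
    if (j : ℕ) < (i : ℕ) then
      a ⟨(i : ℕ) - (j : ℕ), lt_of_le_of_lt (Nat.sub_le _ _) i.isLt⟩
    else if (i : ℕ) < (j : ℕ) then
      star (α ⟨(j : ℕ) - (i : ℕ), lt_of_le_of_lt (Nat.sub_le _ _) j.isLt⟩)
    else 0

lemma aT_shift {n m : ℕ} (a : Fin n → ℂ) (α : Fin m → ℂ) (c : ℂ)
    (i i' : Fin n) (j j' : Fin m) (hi : (i' : ℕ) = (i : ℕ) + 1) (hj : (j' : ℕ) = (j : ℕ) + 1) :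
    (aT a α + c • rId n m) i' j' = (aT a α + c • rId n m) i j := by
  simp only [Matrix.add_apply, Matrix.smul_apply, aT, rId, Matrix.of_apply, hi, hj,
    smul_eq_mul]
  split_ifs <;> simp only [mul_zero, mul_one, add_zero, zero_add] <;> first
    | rfl
    | omega
    | exact congrArg a (by simp only [Fin.mk.injEq]; omega)
    | exact congrArg (fun x => star (α x)) (by simp only [Fin.mk.injEq]; omega)

theorem stmt13 {n m l : ℕ} (hn : 0 < n) (hl : 0 < l) (hnm : n ≤ m) (hlm : l ≤ m)
    (a0 b0 : ℂ) (a : Fin n → ℂ) (α : Fin m → ℂ) (b : Fin m → ℂ) (β : Fin l → ℂ)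
    (ha : a ⟨0, hn⟩ = 0) (hα : α ⟨0, hn.trans_le hnm⟩ = 0)
    (hb : b ⟨0, hn.trans_le hnm⟩ = 0) (hβ : β ⟨0, hl⟩ = 0)
    (A : Matrix (Fin n) (Fin m) ℂ) (B : Matrix (Fin m) (Fin l) ℂ)
    (hA : A = aT a α + a0 • rId n m) (hB : B = aT b β + b0 • rId m l)
    (lam : ℂ) (hlam : lam ≠ 0)
    (h1 : (fun i : Fin n => if h : (i : ℕ) = 0 then 0
          else star (α ⟨m - (i : ℕ), Nat.sub_lt (hn.trans_le hnm) (Nat.pos_of_ne_zero h)⟩)) = lam • a)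
    (h2 : β = (starRingEnd ℂ lam) • (fun j : Fin l => if h : (j : ℕ) = 0 then 0
          else star (b ⟨m - (j : ℕ), Nat.sub_lt (hn.trans_le hnm) (Nat.pos_of_ne_zero h)⟩))) :
    IsAT (A * B) := by
  subst hA hB
  obtain ⟨m', rfl⟩ : ∃ m', m = m' + 1 :=
    ⟨m - 1, (Nat.succ_pred_eq_of_pos (hn.trans_le hnm)).symm⟩
  intro i j hi hj
  simp only [Matrix.mul_apply]
  rw [Fin.sum_univ_succ]
  conv_rhs => rw [Fin.sum_univ_castSucc]
  have key : ∀ k : Fin m',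
      (aT a α + a0 • rId n (m' + 1)) ⟨(i : ℕ) + 1, hi⟩ k.succ *
        (aT b β + b0 • rId (m' + 1) l) k.succ ⟨(j : ℕ) + 1, hj⟩ =
      (aT a α + a0 • rId n (m' + 1)) i k.castSucc *
        (aT b β + b0 • rId (m' + 1) l) k.castSucc j := by
    intro k
    rw [aT_shift a α a0 i ⟨(i : ℕ) + 1, hi⟩ k.castSucc k.succ rfl (by simp),
      aT_shift b β b0 k.castSucc k.succ j ⟨(j : ℕ) + 1, hj⟩ (by simp) rfl]
  rw [Finset.sum_congr rfl (fun k _ => key k), add_comm]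
  congr 1
  -- boundary terms
  have him : (i : ℕ) < m' := by omega
  have hjm : (j : ℕ) < m' := by omega
  have e1 : (aT a α + a0 • rId n (m' + 1)) ⟨(i : ℕ) + 1, hi⟩ (0 : Fin (m' + 1)) =
      a ⟨(i : ℕ) + 1, hi⟩ := by
    simp [aT, rId, Matrix.add_apply]
  have e2 : (aT b β + b0 • rId (m' + 1) l) (0 : Fin (m' + 1)) ⟨(j : ℕ) + 1, hj⟩ =
      star (β ⟨(j : ℕ) + 1, hj⟩) := by
    simp [aT, rId, Matrix.add_apply]
  have e3 : (aT a α + a0 • rId n (m' + 1)) i (Fin.last m') =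
      star (α ⟨m' - (i : ℕ), by omega⟩) := by
    simp only [Matrix.add_apply, aT, rId, Matrix.smul_apply, Matrix.of_apply,
      Fin.val_last, smul_eq_mul]
    rw [if_neg (by omega), if_pos him, if_neg (by omega)]
    ring
  have e4 : (aT b β + b0 • rId (m' + 1) l) (Fin.last m') j =
      b ⟨m' - (j : ℕ), by omega⟩ := by
    simp only [Matrix.add_apply, aT, rId, Matrix.smul_apply, Matrix.of_apply,
      Fin.val_last, smul_eq_mul]
    rw [if_pos hjm, if_neg (by omega)]
    ring
  rw [e1, e2, e3, e4]
  have c1 : star (α ⟨m' - (i : ℕ), by omega⟩) = lam * a ⟨(i : ℕ) + 1, hi⟩ := by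
    have := congrFun h1 ⟨(i : ℕ) + 1, hi⟩
    simp only [dif_neg (Nat.succ_ne_zero (i : ℕ)), Pi.smul_apply, smul_eq_mul] at this
    rw [← this]
    exact congrArg (fun x => star (α x)) (by simp only [Fin.mk.injEq]; omega)
  have c2 : star (β ⟨(j : ℕ) + 1, hj⟩) = lam * b ⟨m' - (j : ℕ), by omega⟩ := by
    have := congrFun h2 ⟨(j : ℕ) + 1, hj⟩
    simp only [dif_neg (Nat.succ_ne_zero (j : ℕ)), Pi.smul_apply, smul_eq_mul] at this
    rw [this]
    simp only [starRingEnd_apply, star_mul', star_star]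
    exact congrArg (fun x => lam * b x) (by simp only [Fin.mk.injEq]; omega)
  rw [c1, c2]
  ring
end

section
/- Let A_0 = A(a,α) be an n×m asymmetric Toeplitz matrix with zero diagonal, and B_0 = A(b,β) an m×l asymmetric Toeplitz matrix with zero diagonal, where max(n,l) ≤ m. Then the displacement of their product satisfies Δ(A_0 B_0) = A_0 b ⊗ ζ_0 + a ⊗ β + e_0 ⊗ (S_l B_0* S_m* α) − α̂_{(m,n)} ⊗ b̂_{(m,l)}, where α̂_{(m,n)} = (0, ᾱ_{m-1}, ..., ᾱ_{m-n+1}) ∈ C^n and b̂_{(m,l)} = (0, b̄_{m-1}, ..., b̄_{m-l+1}) ∈ C^l. -/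
open Matrix BigOperators

/-!
Since `Sₘ* Sₘ = I - e_{m-1} ⊗ e_{m-1}`, every product satisfies
`Δ(AB) = ΔA · B + Sₙ A Sₘ* · ΔB - (Sₙ A e_{m-1}) ⊗ (S_l B* e_{m-1})`.
For zero-diagonal Toeplitz matrices `ΔA(a,α) = a ⊗ ζ₀ + e₀ ⊗ α`, so `Sₙ A Sₘ*` differs from `A`
only by this rank-two term. Substituting, the two copies of `(α* b) e₀ ⊗ ζ₀` cancel, and the
last column of `Sₙ A₀` and last row of `B₀ S_l*` are the reversed tails `α̂` and `b̂`.
-/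

section Displacement

variable {n m l : ℕ}

lemma oprod_eq_vecMulVec (x : Fin n → ℂ) (y : Fin m → ℂ) : oprod x y = vecMulVec x (star y) :=
  rfl

lemma Sh_mul_apply (M : Matrix (Fin n) (Fin m) ℂ) (i : Fin n) (j : Fin m) :
    (Sh n * M) i j = if h : 0 < (i : ℕ) then M ⟨i - 1, by omega⟩ j else 0 := by
  rw [mul_apply]
  split_ifs with h
  · rw [Finset.sum_eq_single ⟨i - 1, by omega⟩ (fun k _ hk => by
      simp [Sh, Fin.ext_iff] at hk ⊢; omega) (by simp)]
    simp [Sh]; omega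
  · exact Finset.sum_eq_zero fun k _ => by simp [Sh]; omega

lemma mul_conjTranspose_Sh_apply (M : Matrix (Fin n) (Fin m) ℂ) (i : Fin n) (j : Fin m) :
    (M * (Sh m)ᴴ) i j = if h : 0 < (j : ℕ) then M i ⟨j - 1, by omega⟩ else 0 := by
  rw [mul_apply]
  split_ifs with h
  · rw [Finset.sum_eq_single ⟨j - 1, by omega⟩ (fun k _ hk => by
      simp [Sh, Fin.ext_iff] at hk ⊢; omega) (by simp)]
    simp [Sh]; omega
  · exact Finset.sum_eq_zero fun k _ => by simp [Sh]; omega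

lemma conjTranspose_Sh_mul_apply (M : Matrix (Fin n) (Fin m) ℂ) (i : Fin n) (j : Fin m) :
    ((Sh n)ᴴ * M) i j = if h : (i : ℕ) + 1 < n then M ⟨i + 1, h⟩ j else 0 := by
  rw [mul_apply]
  split_ifs with h
  · rw [Finset.sum_eq_single ⟨i + 1, h⟩ (fun k _ hk => by
      simp [Sh, Fin.ext_iff] at hk ⊢; omega) (by simp)]
    simp [Sh]
  · exact Finset.sum_eq_zero fun k _ => by simp [Sh]; omega

lemma conjTranspose_Sh_mul_Sh (hm : 0 < m) :
    (Sh m)ᴴ * Sh m =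
      1 - vecMulVec (Pi.single ⟨m - 1, by omega⟩ 1) (Pi.single ⟨m - 1, by omega⟩ 1) := by
  ext i j
  rw [conjTranspose_Sh_mul_apply]
  split_ifs with h <;>
    simp [Sh, one_apply, vecMulVec_apply, Pi.single_apply, Fin.ext_iff] <;>
    split_ifs <;> first | omega | norm_num

lemma conjTranspose_Sh_mulVec_single_zero (hm : 0 < m) :
    (Sh m)ᴴ *ᵥ Pi.single ⟨0, hm⟩ 1 = 0 := by
  ext i
  simp [Sh]

lemma dsp_mul (hm : 0 < m) (A : Matrix (Fin n) (Fin m) ℂ) (B : Matrix (Fin m) (Fin l) ℂ) :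
    dsp (A * B) = dsp A * B + Sh n * A * (Sh m)ᴴ * dsp B -
      vecMulVec ((Sh n * A) *ᵥ Pi.single ⟨m - 1, by omega⟩ 1)
        (Pi.single ⟨m - 1, by omega⟩ 1 ᵥ* (B * (Sh l)ᴴ)) := by
  rw [← mul_vecMulVec, ← vecMulVec_mul, ← sub_sub_cancel 1 (vecMulVec _ _),
    ← conjTranspose_Sh_mul_Sh hm]
  simp only [dsp, Matrix.mul_sub, Matrix.sub_mul, Matrix.one_mul, Matrix.mul_assoc]
  abel

lemma isAT_aT (a : Fin n → ℂ) (α : Fin m → ℂ) : IsAT (aT a α) := by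
  intro i j hi hj
  simp [aT]

lemma dsp_aT (hn : 0 < n) (hm : 0 < m) (a : Fin n → ℂ) (α : Fin m → ℂ)
    (ha : a ⟨0, hn⟩ = 0) (hα : α ⟨0, hm⟩ = 0) :
    dsp (aT a α) =
      vecMulVec a (Pi.single ⟨0, hm⟩ 1) + vecMulVec (Pi.single ⟨0, hn⟩ 1) (star α) := by
  ext ⟨_ | i, hi⟩ ⟨_ | j, hj⟩ <;>
    simp only [dsp, Matrix.sub_apply, Matrix.add_apply, mul_conjTranspose_Sh_apply, Sh_mul_apply,
      vecMulVec_apply, Pi.single_apply, Fin.ext_iff, Pi.star_apply]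
  · simp [aT, ha, hα]
  · simp [aT]
  · simp [aT]
  · simpa [sub_eq_zero] using isAT_aT a α ⟨i, by omega⟩ ⟨j, by omega⟩ hi hj

lemma aT_mulVec_of_apply_zero (hn : 0 < n) (hm : 0 < m) (a : Fin n → ℂ)
    (α : Fin m → ℂ) (ha : a ⟨0, hn⟩ = 0) (hα : α ⟨0, hm⟩ = 0) (v : Fin m → ℂ)
    (hv : v ⟨0, hm⟩ = 0) :
    aT a α *ᵥ v = (Sh n * aT a α * (Sh m)ᴴ) *ᵥ v + (star α ⬝ᵥ v) • Pi.single ⟨0, hn⟩ 1 := by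
  have h := dsp_aT hn hm a α ha hα
  rw [dsp, sub_eq_iff_eq_add'] at h
  conv_lhs => rw [h]
  rw [add_mulVec, add_mulVec, vecMulVec_mulVec, vecMulVec_mulVec, single_one_dotProduct, hv]
  simp

lemma vecMul_aT_of_apply_zero (hn : 0 < n) (hm : 0 < m) (a : Fin n → ℂ)
    (α : Fin m → ℂ) (ha : a ⟨0, hn⟩ = 0) (hα : α ⟨0, hm⟩ = 0) (w : Fin n → ℂ)
    (hw : w ⟨0, hn⟩ = 0) :
    w ᵥ* aT a α = w ᵥ* (Sh n * aT a α * (Sh m)ᴴ) + (w ⬝ᵥ a) • Pi.single ⟨0, hm⟩ 1 := by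
  have h := dsp_aT hn hm a α ha hα
  rw [dsp, sub_eq_iff_eq_add'] at h
  conv_lhs => rw [h]
  rw [vecMul_add, vecMul_add, vecMul_vecMulVec, vecMul_vecMulVec, dotProduct_single_one, hw]
  simp

lemma Sh_mul_aT_mulVec_single_last (hm : 0 < m) (hnm : n ≤ m) (a : Fin n → ℂ)
    (α : Fin m → ℂ) :
    (Sh n * aT a α) *ᵥ Pi.single ⟨m - 1, by omega⟩ 1 =
      fun i : Fin n => if h : (i : ℕ) = 0 then 0 else star (α ⟨m - i, by omega⟩) := by
  ext ⟨_ | i, hi⟩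
  · simp [Sh_mul_apply]
  · simp only [mulVec_single_one, col_apply, Sh_mul_apply, aT, of_apply]
    rw [dif_pos (by omega), if_neg (by omega), if_pos (by omega), dif_neg (by omega)]
    congr 3
    omega

lemma single_zero_vecMul_aT (hn : 0 < n) (hm : 0 < m) (a : Fin n → ℂ)
    (α : Fin m → ℂ) (hα : α ⟨0, hm⟩ = 0) :
    Pi.single ⟨0, hn⟩ 1 ᵥ* aT a α = star α := by
  ext ⟨_ | j, hj⟩ <;> simp [aT, hα]

lemma single_last_vecMul_aT_mul_conjTranspose_Sh (hm : 0 < m) (hlm : l ≤ m)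
    (b : Fin m → ℂ) (β : Fin l → ℂ) :
    Pi.single ⟨m - 1, by omega⟩ 1 ᵥ* (aT b β * (Sh l)ᴴ) =
      fun j : Fin l => if h : (j : ℕ) = 0 then 0 else b ⟨m - j, by omega⟩ := by
  ext ⟨_ | j, hj⟩
  · simp [mul_conjTranspose_Sh_apply]
  · simp only [single_one_vecMul, row_apply, mul_conjTranspose_Sh_apply, aT, of_apply]
    rw [dif_pos (by omega), if_pos (by omega), dif_neg (by omega)]
    congr 2
    omega

lemma dsp_aT_mul_aT (hn : 0 < n) (hl : 0 < l) (hnm : n ≤ m) (hlm : l ≤ m)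
    (a : Fin n → ℂ) (α : Fin m → ℂ) (b : Fin m → ℂ) (β : Fin l → ℂ)
    (ha : a ⟨0, hn⟩ = 0) (hα : α ⟨0, hn.trans_le hnm⟩ = 0)
    (hb : b ⟨0, hn.trans_le hnm⟩ = 0) (hβ : β ⟨0, hl⟩ = 0) :
    dsp (aT a α * aT b β) =
      vecMulVec (aT a α *ᵥ b) (Pi.single ⟨0, hl⟩ 1) + vecMulVec a (star β) +
      vecMulVec (Pi.single ⟨0, hn⟩ 1) (star α ᵥ* (Sh m * aT b β * (Sh l)ᴴ)) -
      vecMulVec (fun i : Fin n => if h : (i : ℕ) = 0 then 0 else star (α ⟨m - i, by omega⟩))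
        (fun j : Fin l => if h : (j : ℕ) = 0 then 0 else b ⟨m - j, by omega⟩) := by
  have hm : 0 < m := hn.trans_le hnm
  have hAb := aT_mulVec_of_apply_zero hn hm a α ha hα b hb
  have hαB := vecMul_aT_of_apply_zero hm hl b β hb hβ (star α) (by simp [hα])
  have hSAS : (Sh n * aT a α * (Sh m)ᴴ) *ᵥ Pi.single ⟨0, hm⟩ 1 = 0 := by
    rw [← mulVec_mulVec, conjTranspose_Sh_mulVec_single_zero, mulVec_zero]
  rw [dsp_mul hm, dsp_aT hn hm a α ha hα, dsp_aT hm hl b β hb hβ,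
    Sh_mul_aT_mulVec_single_last hm hnm, single_last_vecMul_aT_mul_conjTranspose_Sh hm hlm,
    Matrix.add_mul, vecMulVec_mul, vecMulVec_mul, single_zero_vecMul_aT hm hl b β hβ, hαB,
    Matrix.mul_add, mul_vecMulVec, mul_vecMulVec, hSAS, zero_vecMulVec,
    eq_sub_of_add_eq hAb.symm]
  simp only [vecMulVec_add, sub_vecMulVec, vecMulVec_smul, smul_vecMulVec]
  abel

end Displacement

theorem stmt19 {n m l : ℕ} (hn : 0 < n) (hl : 0 < l) (hnm : n ≤ m) (hlm : l ≤ m)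
    (a : Fin n → ℂ) (α : Fin m → ℂ) (b : Fin m → ℂ) (β : Fin l → ℂ)
    (ha : a ⟨0, hn⟩ = 0) (hα : α ⟨0, hn.trans_le hnm⟩ = 0)
    (hb : b ⟨0, hn.trans_le hnm⟩ = 0) (hβ : β ⟨0, hl⟩ = 0) :
    dsp (aT a α * aT b β) =
      oprod ((aT a α).mulVec b) (Pi.single (⟨0, hl⟩ : Fin l) 1) +
      oprod a β +
      oprod (Pi.single (⟨0, hn⟩ : Fin n) 1) ((Sh l * (aT b β)ᴴ * (Sh m)ᴴ).mulVec α) -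
      oprod (fun i : Fin n => if h : (i : ℕ) = 0 then 0
          else star (α ⟨m - (i : ℕ), Nat.sub_lt (hn.trans_le hnm) (Nat.pos_of_ne_zero h)⟩)) (fun j : Fin l => if h : (j : ℕ) = 0 then 0
          else star (b ⟨m - (j : ℕ), Nat.sub_lt (hn.trans_le hnm) (Nat.pos_of_ne_zero h)⟩)) := by
  rw [dsp_aT_mul_aT hn hl hnm hlm a α b β ha hα hb hβ]
  simp only [oprod_eq_vecMulVec, star_mulVec, conjTranspose_mul, conjTranspose_conjTranspose,
    Matrix.mul_assoc]
  congr 3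
  · simp
  · ext j
    by_cases hj : (j : ℕ) = 0 <;> simp [hj]
end
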